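/- arXiv:2102.03730 — 2 statements merged into one kernel-verified Lean document; each statement's English description precedes it below -/
import Mathlib

section
/- If S₁ and S₂ are graded weakly second submodules of M, then S = S₁ + S₂ is a graded strongly classical 2-absorbing second submodule of M. -/
open Pointwise

section GradedDefs

variable {G : Type*} [Group G] [DecidableEq G] {R : Type*} [CommRing R]
  {M : Type*} [AddCommGroup M] [Module R M]

/-- `R` is a `G`-graded commutative ring via the additive subgroups `𝒜 α`:
`R_α R_β ⊆ R_{αβ}` and `R = ⊕_{α ∈ G} R_α`. -/
structure IsRingGrading (𝒜 : G → AddSubgroup R) : Prop where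
  one_mem : (1 : R) ∈ 𝒜 1
  mul_mem : ∀ ⦃α β : G⦄ ⦃r s : R⦄, r ∈ 𝒜 α → s ∈ 𝒜 β → r * s ∈ 𝒜 (α * β)
  isInternal : DirectSum.IsInternal 𝒜

/-- `M` is a graded module over the `G`-graded ring `R`:
`R_α M_β ⊆ M_{αβ}` and `M = ⊕_{α ∈ G} M_α`. -/
structure IsModuleGrading (𝒜 : G → AddSubgroup R) (ℳ : G → AddSubgroup M) : Prop where
  smul_mem : ∀ ⦃α β : G⦄ ⦃r : R⦄ ⦃m : M⦄, r ∈ 𝒜 α → m ∈ ℳ β → r • m ∈ ℳ (α * β)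
  isInternal : DirectSum.IsInternal ℳ

/-- A submodule `N` of `M` is a graded submodule iff `N = ⊕_{α ∈ G} (N ∩ M_α)`,
equivalently, every element of `N` is a sum of homogeneous elements of `N`. -/
def IsGradedSubmodule (ℳ : G → AddSubgroup M) (N : Submodule R M) : Prop :=
  ∀ n ∈ N, n ∈ Submodule.span R {m : M | m ∈ N ∧ ∃ α, m ∈ ℳ α}

/-- An ideal `I` of `R` is a graded ideal iff `I = ⊕_{α ∈ G} (I ∩ R_α)`. -/
def IsGradedIdeal (𝒜 : G → AddSubgroup R) (I : Ideal R) : Prop :=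
  ∀ r ∈ I, r ∈ Ideal.span {s : R | s ∈ I ∧ ∃ α, s ∈ 𝒜 α}

/-- A proper graded submodule `C` of `M` is completely graded irreducible if whenever
`C = ⋂_{λ ∈ Δ} C_λ` for a family of graded submodules `C_λ`, then `C = C_β` for some `β`. -/
def CompletelyGradedIrreducible (ℳ : G → AddSubgroup M) (C : Submodule R M) : Prop :=
  IsGradedSubmodule ℳ C ∧ C ≠ ⊤ ∧
    ∀ S : Set (Submodule R M), (∀ D ∈ S, IsGradedSubmodule ℳ D) → C = sInf S → C ∈ S

/-- A non-zero graded submodule `C` of `M` is a graded classical 2-absorbing second submodule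
if whenever `r, s, t ∈ h(R)`, `U` is a completely graded irreducible submodule of `M` and
`r·s·t·C ⊆ U`, then `r·s·C ⊆ U` or `s·t·C ⊆ U` or `r·t·C ⊆ U`. -/
def IsGrClassical2AbsorbingSecond (𝒜 : G → AddSubgroup R) (ℳ : G → AddSubgroup M)
    (C : Submodule R M) : Prop :=
  C ≠ ⊥ ∧ IsGradedSubmodule ℳ C ∧
    ∀ r s t : R, (∃ α, r ∈ 𝒜 α) → (∃ β, s ∈ 𝒜 β) → (∃ γ, t ∈ 𝒜 γ) →
      ∀ U : Submodule R M, CompletelyGradedIrreducible ℳ U →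
        r • s • t • C ≤ U → (r • s • C ≤ U ∨ s • t • C ≤ U ∨ r • t • C ≤ U)

/-- A non-zero graded submodule `C` of `M` is a graded strongly classical 2-absorbing second
submodule if whenever `r, s, t ∈ h(R)`, `U₁, U₂, U₃` are completely graded irreducible
submodules of `M` and `r·s·t·C ⊆ U₁ ∩ U₂ ∩ U₃`, then `r·s·C ⊆ U₁ ∩ U₂ ∩ U₃` or
`s·t·C ⊆ U₁ ∩ U₂ ∩ U₃` or `r·t·C ⊆ U₁ ∩ U₂ ∩ U₃`. -/
def IsGrStronglyClassical2AbsorbingSecond (𝒜 : G → AddSubgroup R) (ℳ : G → AddSubgroup M)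
    (C : Submodule R M) : Prop :=
  C ≠ ⊥ ∧ IsGradedSubmodule ℳ C ∧
    ∀ r s t : R, (∃ α, r ∈ 𝒜 α) → (∃ β, s ∈ 𝒜 β) → (∃ γ, t ∈ 𝒜 γ) →
      ∀ U₁ U₂ U₃ : Submodule R M, CompletelyGradedIrreducible ℳ U₁ →
        CompletelyGradedIrreducible ℳ U₂ → CompletelyGradedIrreducible ℳ U₃ →
        r • s • t • C ≤ U₁ ⊓ U₂ ⊓ U₃ →
        (r • s • C ≤ U₁ ⊓ U₂ ⊓ U₃ ∨ s • t • C ≤ U₁ ⊓ U₂ ⊓ U₃ ∨ r • t • C ≤ U₁ ⊓ U₂ ⊓ U₃)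

/-- A non-zero graded submodule `S` of `M` is a graded weakly second submodule if whenever
`r, s ∈ h(R)`, `N` is a graded submodule of `M` and `r·s·S ⊆ N`, then `r·S ⊆ N` or `s·S ⊆ N`. -/
def IsGrWeaklySecond (𝒜 : G → AddSubgroup R) (ℳ : G → AddSubgroup M)
    (S : Submodule R M) : Prop :=
  S ≠ ⊥ ∧ IsGradedSubmodule ℳ S ∧
    ∀ r s : R, (∃ α, r ∈ 𝒜 α) → (∃ β, s ∈ 𝒜 β) →
      ∀ N : Submodule R M, IsGradedSubmodule ℳ N →
        r • s • S ≤ N → (r • S ≤ N ∨ s • S ≤ N)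

/-- A proper graded ideal `I` of `R` is a graded 2-absorbing ideal if whenever `r, s, t ∈ h(R)`
with `r·s·t ∈ I`, then `r·s ∈ I` or `r·t ∈ I` or `s·t ∈ I`. -/
def IsGr2AbsorbingIdeal (𝒜 : G → AddSubgroup R) (I : Ideal R) : Prop :=
  I ≠ ⊤ ∧ IsGradedIdeal 𝒜 I ∧
    ∀ r s t : R, (∃ α, r ∈ 𝒜 α) → (∃ β, s ∈ 𝒜 β) → (∃ γ, t ∈ 𝒜 γ) →
      r * s * t ∈ I → (r * s ∈ I ∨ r * t ∈ I ∨ s * t ∈ I)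

end GradedDefs

/-!
A graded submodule is the same as one containing every homogeneous component of its elements,
and the latter property is visibly stable under intersection; so `N = U₁ ∩ U₂ ∩ U₃` is graded.
If `r s t • Sᵢ ⊆ N`, the weakly second property, applied first to `r` and `s t` and then to `s`
and `t`, puts at least two of `r s • Sᵢ`, `s t • Sᵢ`, `r t • Sᵢ` inside `N`. Two pairs taken from
three products share one, and that product maps all of `S₁ + S₂` into `N`.
-/

open DirectSum

namespace IsGradedSubmodule

variable {G : Type*} {R : Type*} [CommRing R] {M : Type*} [AddCommGroup M] [Module R M]
  {𝒜 : G → AddSubgroup R} {ℳ : G → AddSubgroup M}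

section Decomposition

variable [DecidableEq G] [Decomposition ℳ] {N : Submodule R M}

theorem decompose_mem_of_mem_homogeneous {m : M} {α : G} (hm : m ∈ ℳ α) (hmN : m ∈ N) (γ : G) :
    (decompose ℳ m γ : M) ∈ N := by
  rcases eq_or_ne α γ with rfl | hne
  · rwa [decompose_of_mem_same ℳ hm]
  · rw [decompose_of_mem_ne ℳ hm hne]
    exact N.zero_mem

theorem decompose_sum_mem {ι : Type*} {s : Finset ι} {f : ι → M}
    (h : ∀ i ∈ s, ∀ γ, (decompose ℳ (f i) γ : M) ∈ N) (γ : G) :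
    (decompose ℳ (∑ i ∈ s, f i) γ : M) ∈ N := by
  rw [decompose_sum, DFinsupp.finsetSum_apply, AddSubmonoidClass.coe_finsetSum]
  exact N.sum_mem fun i hi ↦ h i hi γ

theorem isHomogeneous [Group G] [Decomposition 𝒜] (hℳ : IsModuleGrading 𝒜 ℳ)
    (hN : IsGradedSubmodule ℳ N) :
    SetLike.IsHomogeneous ℳ N := by
  classical
  intro γ n hn
  have hspan := hN n hn
  clear hn
  induction hspan using Submodule.span_induction generalizing γ with
  | mem m hm => exact decompose_mem_of_mem_homogeneous hm.2.choose_spec hm.1 γ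
  | zero => simp
  | add x y _ _ hx hy =>
    rw [decompose_add, DirectSum.add_apply, AddSubgroup.coe_add]
    exact N.add_mem (hx γ) (hy γ)
  | smul c x _ hx =>
    rw [← sum_support_decompose 𝒜 c, ← sum_support_decompose ℳ x, Finset.sum_smul]
    simp_rw [Finset.smul_sum]
    exact decompose_sum_mem (fun β _ ↦ decompose_sum_mem fun δ _ ↦
      decompose_mem_of_mem_homogeneous (hℳ.smul_mem (decompose 𝒜 c β).2 (decompose ℳ x δ).2)
        (N.smul_mem _ (hx δ))) γ

theorem of_isHomogeneous (hN : SetLike.IsHomogeneous ℳ N) : IsGradedSubmodule ℳ N := by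
  classical
  intro n hn
  rw [← sum_support_decompose ℳ n]
  exact Submodule.sum_mem _ fun γ _ ↦ Submodule.subset_span ⟨hN γ hn, γ, (decompose ℳ n γ).2⟩

end Decomposition

theorem inf [Group G] [DecidableEq G] (h𝒜 : IsInternal 𝒜) (hℳ : IsModuleGrading 𝒜 ℳ)
    {N₁ N₂ : Submodule R M} (hN₁ : IsGradedSubmodule ℳ N₁) (hN₂ : IsGradedSubmodule ℳ N₂) :
    IsGradedSubmodule ℳ (N₁ ⊓ N₂) := by
  let := h𝒜.chooseDecomposition
  let := hℳ.isInternal.chooseDecomposition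
  exact of_isHomogeneous fun γ _ hn ↦
    ⟨isHomogeneous hℳ hN₁ γ hn.1, isHomogeneous hℳ hN₂ γ hn.2⟩

theorem sup {N₁ N₂ : Submodule R M} (hN₁ : IsGradedSubmodule ℳ N₁)
    (hN₂ : IsGradedSubmodule ℳ N₂) : IsGradedSubmodule ℳ (N₁ ⊔ N₂) := by
  intro n hn
  obtain ⟨a, ha, b, hb, rfl⟩ := Submodule.mem_sup.mp hn
  refine add_mem (Submodule.span_mono ?_ (hN₁ a ha)) (Submodule.span_mono ?_ (hN₂ b hb))
  · exact fun m hm ↦ ⟨Submodule.mem_sup_left hm.1, hm.2⟩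
  · exact fun m hm ↦ ⟨Submodule.mem_sup_right hm.1, hm.2⟩

end IsGradedSubmodule

namespace Submodule

variable {R : Type*} [CommSemiring R] {M : Type*} [AddCommMonoid M] [Module R M]
  {S N : Submodule R M}

theorem smul_smul_le_of_smul_le {a : R} (h : a • S ≤ N) (b : R) : b • a • S ≤ N :=
  (smul_mono_right b h).trans (Submodule.smul_le_self_of_tower b N)

theorem smul_smul_le_of_smul_le' {a : R} (h : a • S ≤ N) (b : R) : a • b • S ≤ N := by
  rw [smul_comm]
  exact smul_smul_le_of_smul_le h b

end Submodule

namespace IsGrWeaklySecond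

variable {G : Type*} [Group G] [DecidableEq G] {R : Type*} [CommRing R]
  {M : Type*} [AddCommGroup M] [Module R M] {𝒜 : G → AddSubgroup R} {ℳ : G → AddSubgroup M}
  {S N : Submodule R M}

theorem two_of_three (h𝒜 : IsRingGrading 𝒜) (hS : IsGrWeaklySecond 𝒜 ℳ S)
    {r s t : R} (hr : ∃ α, r ∈ 𝒜 α) (hs : ∃ β, s ∈ 𝒜 β) (ht : ∃ γ, t ∈ 𝒜 γ)
    (hN : IsGradedSubmodule ℳ N) (h : r • s • t • S ≤ N) :
    (r • s • S ≤ N ∧ r • t • S ≤ N) ∨ (r • s • S ≤ N ∧ s • t • S ≤ N) ∨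
      (r • t • S ≤ N ∧ s • t • S ≤ N) := by
  obtain ⟨β, hβ⟩ := hs
  obtain ⟨γ, hγ⟩ := ht
  rw [smul_smul s t] at h
  rcases hS.2.2 r (s * t) hr ⟨β * γ, h𝒜.mul_mem hβ hγ⟩ N hN h with hr' | hst
  · exact .inl
      ⟨Submodule.smul_smul_le_of_smul_le' hr' s, Submodule.smul_smul_le_of_smul_le' hr' t⟩
  · rw [← smul_smul] at hst
    rcases hS.2.2 s t ⟨β, hβ⟩ ⟨γ, hγ⟩ N hN hst with hs' | ht'
    · exact .inr (.inl ⟨Submodule.smul_smul_le_of_smul_le hs' r, hst⟩)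
    · exact .inr (.inr ⟨Submodule.smul_smul_le_of_smul_le ht' r, hst⟩)

end IsGrWeaklySecond

theorem stmt16 {G : Type*} [Group G] [DecidableEq G] {R : Type*} [CommRing R]
    {M : Type*} [AddCommGroup M] [Module R M]
    (𝒜 : G → AddSubgroup R) (ℳ : G → AddSubgroup M)
    (h𝒜 : IsRingGrading 𝒜) (hℳ : IsModuleGrading 𝒜 ℳ)
    (S₁ S₂ : Submodule R M) (h₁ : IsGrWeaklySecond 𝒜 ℳ S₁)
    (h₂ : IsGrWeaklySecond 𝒜 ℳ S₂) :
    IsGrStronglyClassical2AbsorbingSecond 𝒜 ℳ (S₁ ⊔ S₂) := by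
  refine ⟨ne_bot_of_le_ne_bot h₁.1 le_sup_left, h₁.2.1.sup h₂.2.1, ?_⟩
  intro r s t hr hs ht U₁ U₂ U₃ hU₁ hU₂ hU₃ hle
  have hN : IsGradedSubmodule ℳ (U₁ ⊓ U₂ ⊓ U₃) :=
    (hU₁.1.inf h𝒜.isInternal hℳ hU₂.1).inf h𝒜.isInternal hℳ hU₃.1
  simp only [Submodule.smul_sup', sup_le_iff] at hle ⊢
  have k₁ := h₁.two_of_three h𝒜 hr hs ht hN hle.1
  have k₂ := h₂.two_of_three h𝒜 hr hs ht hN hle.2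
  tauto
end

section
/- Let R = R₁ × R₂ be the product of G-graded commutative rings R₁ and R₂ (a G-graded ring with components (R₁)_α × (R₂)_α), let M₁ be a graded R₁-module and M₂ a graded R₂-module, and let M = M₁ × M₂ with the grading (M₁)_α × (M₂)_α, a graded R-module. Let C₁ be a non-zero graded submodule of M₁. Then C = C₁ × 0 is a graded strongly classical 2-absorbing second submodule of M if and only if C₁ is a graded strongly classical 2-absorbing second submodule of M₁. -/
open Pointwise

section ProdSetup

variable {R₁ R₂ : Type*} [CommRing R₁] [CommRing R₂]
  {M₁ M₂ : Type*} [AddCommGroup M₁] [Module R₁ M₁] [AddCommGroup M₂] [Module R₂ M₂]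

/-- The componentwise action of `R₁ × R₂` on `M₁ × M₂`. -/
instance prodPairSMul : SMul (R₁ × R₂) (M₁ × M₂) :=
  ⟨fun r m => (r.1 • m.1, r.2 • m.2)⟩

/-- `M₁ × M₂` is a module over the product ring `R₁ × R₂`, acting componentwise. -/
instance prodPairModule : Module (R₁ × R₂) (M₁ × M₂) where
  one_smul m := Prod.ext (one_smul _ _) (one_smul _ _)
  mul_smul r s m := Prod.ext (mul_smul _ _ _) (mul_smul _ _ _)
  smul_zero r := Prod.ext (smul_zero _) (smul_zero _)
  smul_add r m n := Prod.ext (smul_add _ _ _) (smul_add _ _ _)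
  add_smul r s m := Prod.ext (add_smul _ _ _) (add_smul _ _ _)
  zero_smul m := Prod.ext (zero_smul _ _) (zero_smul _ _)

/-- The submodule `C₁ × C₂` of the `(R₁ × R₂)`-module `M₁ × M₂`. -/
def prodPairSubmodule (C₁ : Submodule R₁ M₁) (C₂ : Submodule R₂ M₂) :
    Submodule (R₁ × R₂) (M₁ × M₂) where
  carrier := (C₁ : Set M₁) ×ˢ (C₂ : Set M₂)
  add_mem' ha hb := ⟨C₁.add_mem ha.1 hb.1, C₂.add_mem ha.2 hb.2⟩
  zero_mem' := ⟨C₁.zero_mem, C₂.zero_mem⟩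
  smul_mem' r m hm := ⟨C₁.smul_mem r.1 hm.1, C₂.smul_mem r.2 hm.2⟩

end ProdSetup

/-!
Everything reduces to the first factor. Multiplying `C₁ × 0` by `r ∈ R₁ × R₂` only involves
`r.1`, and `C₁ × 0 ≤ U` iff `C₁ ≤ U₁` where `U₁ = {m | (m, 0) ∈ U}`. If `U₁` is completely graded
irreducible in `M₁` then so is `U₁ × M₂` in `M`, which gives the forward direction. Conversely, a
completely graded irreducible `U` of `M` is the intersection of the graded submodules `U₁ × M₂`
and `M₁ × U₂`, where `U₂ = {m | (0, m) ∈ U}`, hence equal to one of them: either `U₁` is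
completely graded irreducible or `U₁ = M₁`. An intersection of three submodules, each completely
graded irreducible or `⊤`, is `⊤` or an intersection of three completely graded irreducible ones,
so the defining property of `C₁` still applies.
-/

lemma inf_inf_eq_top_or_exists {α : Type*} [SemilatticeInf α] [OrderTop α] {p : α → Prop}
    {a b c : α} (ha : p a ∨ a = ⊤) (hb : p b ∨ b = ⊤) (hc : p c ∨ c = ⊤) :
    a ⊓ b ⊓ c = ⊤ ∨ ∃ u v w, p u ∧ p v ∧ p w ∧ a ⊓ b ⊓ c = u ⊓ v ⊓ w := by
  rcases ha with ha | rfl <;> rcases hb with hb | rfl <;> rcases hc with hc | rfl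
  · exact .inr ⟨a, b, c, ha, hb, hc, rfl⟩
  · exact .inr ⟨a, b, b, ha, hb, hb, by simp⟩
  · exact .inr ⟨a, c, c, ha, hc, hc, by simp⟩
  · exact .inr ⟨a, a, a, ha, ha, ha, by simp⟩
  · exact .inr ⟨b, c, c, hb, hc, hc, by simp⟩
  · exact .inr ⟨b, b, b, hb, hb, hb, by simp⟩
  · exact .inr ⟨c, c, c, hc, hc, hc, by simp⟩
  · exact .inl (by simp)

section Graded

variable {G : Type*} {R : Type*} [CommRing R] {M : Type*} [AddCommGroup M] [Module R M]
  {ℳ : G → AddSubgroup M}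

lemma isGradedSubmodule_top [DecidableEq G] (h : DirectSum.IsInternal ℳ) :
    IsGradedSubmodule ℳ (⊤ : Submodule R M) := by
  rintro n -
  obtain ⟨x, rfl⟩ := h.surjective n
  induction x using DirectSum.induction_on with
  | zero => simp
  | of i y =>
    rw [DirectSum.coeAddMonoidHom_of]
    exact Submodule.subset_span ⟨trivial, i, y.2⟩
  | add a b ha hb =>
    rw [map_add]
    exact Submodule.add_mem _ ha hb

lemma isGradedSubmodule_bot : IsGradedSubmodule ℳ (⊥ : Submodule R M) := by
  intro n hn
  rw [(Submodule.mem_bot R).1 hn]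
  exact Submodule.zero_mem _

lemma IsGrStronglyClassical2AbsorbingSecond.absorbing_of_irreducible_or_top
    {𝒜 : G → AddSubgroup R} {C : Submodule R M}
    (hC : IsGrStronglyClassical2AbsorbingSecond 𝒜 ℳ C) {r s t : R}
    (hr : ∃ α, r ∈ 𝒜 α) (hs : ∃ β, s ∈ 𝒜 β) (ht : ∃ γ, t ∈ 𝒜 γ) {F₁ F₂ F₃ : Submodule R M}
    (h₁ : CompletelyGradedIrreducible ℳ F₁ ∨ F₁ = ⊤)
    (h₂ : CompletelyGradedIrreducible ℳ F₂ ∨ F₂ = ⊤)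
    (h₃ : CompletelyGradedIrreducible ℳ F₃ ∨ F₃ = ⊤)
    (hle : r • s • t • C ≤ F₁ ⊓ F₂ ⊓ F₃) :
    r • s • C ≤ F₁ ⊓ F₂ ⊓ F₃ ∨ s • t • C ≤ F₁ ⊓ F₂ ⊓ F₃ ∨ r • t • C ≤ F₁ ⊓ F₂ ⊓ F₃ := by
  rcases inf_inf_eq_top_or_exists h₁ h₂ h₃ with htop | ⟨U₁, U₂, U₃, hU₁, hU₂, hU₃, heq⟩
  · exact .inl (htop ▸ le_top)
  · rw [heq] at hle ⊢
    exact hC.2.2 r s t hr hs ht U₁ U₂ U₃ hU₁ hU₂ hU₃ hle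

end Graded

section Prod

variable {G : Type*} {R₁ R₂ : Type*} [CommRing R₁] [CommRing R₂]
  {M₁ M₂ : Type*} [AddCommGroup M₁] [Module R₁ M₁] [AddCommGroup M₂] [Module R₂ M₂]
  {ℳ₁ : G → AddSubgroup M₁} {ℳ₂ : G → AddSubgroup M₂}

@[simp] lemma prodPair_smul (r : R₁ × R₂) (m : M₁ × M₂) :
    r • m = (r.1 • m.1, r.2 • m.2) := rfl

@[simp] lemma mem_prodPairSubmodule {C₁ : Submodule R₁ M₁} {C₂ : Submodule R₂ M₂}
    {x : M₁ × M₂} : x ∈ prodPairSubmodule C₁ C₂ ↔ x.1 ∈ C₁ ∧ x.2 ∈ C₂ := Iff.rfl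

def prodPairFst (N : Submodule (R₁ × R₂) (M₁ × M₂)) : Submodule R₁ M₁ where
  carrier := {m | ((m, 0) : M₁ × M₂) ∈ N}
  add_mem' ha hb := by simpa using N.add_mem ha hb
  zero_mem' := N.zero_mem
  smul_mem' r _ hm := by simpa using N.smul_mem ((r, 0) : R₁ × R₂) hm

def prodPairSnd (N : Submodule (R₁ × R₂) (M₁ × M₂)) : Submodule R₂ M₂ where
  carrier := {m | ((0, m) : M₁ × M₂) ∈ N}
  add_mem' ha hb := by simpa using N.add_mem ha hb
  zero_mem' := N.zero_mem
  smul_mem' r _ hm := by simpa using N.smul_mem ((0, r) : R₁ × R₂) hm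

@[simp] lemma mem_prodPairFst {N : Submodule (R₁ × R₂) (M₁ × M₂)} {m : M₁} :
    m ∈ prodPairFst N ↔ ((m, 0) : M₁ × M₂) ∈ N := Iff.rfl

lemma fst_zero_mem {N : Submodule (R₁ × R₂) (M₁ × M₂)} {x : M₁ × M₂} (hx : x ∈ N) :
    ((x.1, 0) : M₁ × M₂) ∈ N := by
  simpa using N.smul_mem ((1, 0) : R₁ × R₂) hx

lemma zero_snd_mem {N : Submodule (R₁ × R₂) (M₁ × M₂)} {x : M₁ × M₂} (hx : x ∈ N) :
    ((0, x.2) : M₁ × M₂) ∈ N := by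
  simpa using N.smul_mem ((0, 1) : R₁ × R₂) hx

@[simp] lemma prodPairFst_prodPairSubmodule (A : Submodule R₁ M₁) (B : Submodule R₂ M₂) :
    prodPairFst (prodPairSubmodule A B) = A := by
  ext m
  simp [B.zero_mem]

@[simp] lemma prodPairFst_top : prodPairFst (⊤ : Submodule (R₁ × R₂) (M₁ × M₂)) = ⊤ := by
  ext
  simp

@[simp] lemma prodPairFst_bot : prodPairFst (⊥ : Submodule (R₁ × R₂) (M₁ × M₂)) = ⊥ := by
  ext
  simp

@[simp] lemma prodPairFst_inf (A B : Submodule (R₁ × R₂) (M₁ × M₂)) :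
    prodPairFst (A ⊓ B) = prodPairFst A ⊓ prodPairFst B := rfl

lemma prodPairFst_sInf (S : Set (Submodule (R₁ × R₂) (M₁ × M₂))) :
    prodPairFst (sInf S) = sInf (prodPairFst '' S) := by
  ext m
  simp [Submodule.mem_sInf]

@[simp] lemma prodPairSubmodule_top_top :
    prodPairSubmodule (⊤ : Submodule R₁ M₁) (⊤ : Submodule R₂ M₂) = ⊤ := by
  ext
  simp

lemma prodPairSubmodule_sInf_top (S : Set (Submodule R₁ M₁)) :
    prodPairSubmodule (sInf S) (⊤ : Submodule R₂ M₂) =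
      sInf ((prodPairSubmodule · (⊤ : Submodule R₂ M₂)) '' S) := by
  ext
  simp [Submodule.mem_sInf]

lemma prodPairSubmodule_bot_le_iff {X : Submodule R₁ M₁} {U : Submodule (R₁ × R₂) (M₁ × M₂)} :
    prodPairSubmodule X (⊥ : Submodule R₂ M₂) ≤ U ↔ X ≤ prodPairFst U := by
  refine ⟨fun h m hm => h ⟨hm, Submodule.zero_mem _⟩, ?_⟩
  rintro h ⟨a, b⟩ ⟨ha, hb : b ∈ (⊥ : Submodule R₂ M₂)⟩
  rw [(Submodule.mem_bot R₂).1 hb]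
  exact h ha

lemma le_prodPairSubmodule_prodPairFst_top (N : Submodule (R₁ × R₂) (M₁ × M₂)) :
    N ≤ prodPairSubmodule (prodPairFst N) ⊤ :=
  fun _ hx => ⟨fst_zero_mem hx, trivial⟩

lemma prodPairSubmodule_fst_top_inf_top_snd (N : Submodule (R₁ × R₂) (M₁ × M₂)) :
    prodPairSubmodule (prodPairFst N) ⊤ ⊓ prodPairSubmodule ⊤ (prodPairSnd N) = N := by
  refine le_antisymm ?_ fun x hx => ⟨⟨fst_zero_mem hx, trivial⟩, ⟨trivial, zero_snd_mem hx⟩⟩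
  rintro ⟨a, b⟩ ⟨⟨ha, -⟩, ⟨-, hb⟩⟩
  simpa using N.add_mem ha hb

lemma smul_prodPairSubmodule (r : R₁ × R₂) (A : Submodule R₁ M₁) (B : Submodule R₂ M₂) :
    r • prodPairSubmodule A B = prodPairSubmodule (r.1 • A) (r.2 • B) := by
  ext x
  simp only [Submodule.mem_smul_pointwise_iff_exists, mem_prodPairSubmodule, prodPair_smul]
  constructor
  · rintro ⟨y, hy, rfl⟩
    exact ⟨⟨y.1, hy.1, rfl⟩, ⟨y.2, hy.2, rfl⟩⟩
  · rintro ⟨⟨y₁, hy₁, h₁⟩, ⟨y₂, hy₂, h₂⟩⟩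
    exact ⟨(y₁, y₂), ⟨hy₁, hy₂⟩, Prod.ext h₁ h₂⟩

lemma IsGradedSubmodule.prodPair {C₁ : Submodule R₁ M₁} {C₂ : Submodule R₂ M₂}
    (h₁ : IsGradedSubmodule ℳ₁ C₁) (h₂ : IsGradedSubmodule ℳ₂ C₂) :
    IsGradedSubmodule (fun α => (ℳ₁ α).prod (ℳ₂ α)) (prodPairSubmodule C₁ C₂) := by
  intro n hn
  set S := Submodule.span (R₁ × R₂)
    {m : M₁ × M₂ | m ∈ prodPairSubmodule C₁ C₂ ∧ ∃ α, m ∈ (ℳ₁ α).prod (ℳ₂ α)}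
  have hfst : ∀ a ∈ Submodule.span R₁ {m | m ∈ C₁ ∧ ∃ α, m ∈ ℳ₁ α}, ((a, 0) : M₁ × M₂) ∈ S := by
    intro a ha
    induction ha using Submodule.span_induction with
    | mem x hx =>
      obtain ⟨hxC, α, hxα⟩ := hx
      exact Submodule.subset_span ⟨⟨hxC, C₂.zero_mem⟩, α, hxα, (ℳ₂ α).zero_mem⟩
    | zero => exact S.zero_mem
    | add x y _ _ hx hy => simpa using S.add_mem hx hy
    | smul r x _ hx => simpa using S.smul_mem ((r, 0) : R₁ × R₂) hx
  have hsnd : ∀ a ∈ Submodule.span R₂ {m | m ∈ C₂ ∧ ∃ α, m ∈ ℳ₂ α}, ((0, a) : M₁ × M₂) ∈ S := by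
    intro a ha
    induction ha using Submodule.span_induction with
    | mem x hx =>
      obtain ⟨hxC, α, hxα⟩ := hx
      exact Submodule.subset_span ⟨⟨C₁.zero_mem, hxC⟩, α, (ℳ₁ α).zero_mem, hxα⟩
    | zero => exact S.zero_mem
    | add x y _ _ hx hy => simpa using S.add_mem hx hy
    | smul r x _ hx => simpa using S.smul_mem ((0, r) : R₁ × R₂) hx
  simpa using S.add_mem (hfst _ (h₁ n.1 hn.1)) (hsnd _ (h₂ n.2 hn.2))

lemma isGradedSubmodule_prodPairFst {N : Submodule (R₁ × R₂) (M₁ × M₂)}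
    (h : IsGradedSubmodule (fun α => (ℳ₁ α).prod (ℳ₂ α)) N) :
    IsGradedSubmodule ℳ₁ (prodPairFst N) := by
  intro a ha
  have hle : Submodule.span (R₁ × R₂) {m | m ∈ N ∧ ∃ α, m ∈ (ℳ₁ α).prod (ℳ₂ α)} ≤
      prodPairSubmodule (Submodule.span R₁ {m | m ∈ prodPairFst N ∧ ∃ α, m ∈ ℳ₁ α}) ⊤ :=
    Submodule.span_le.2 fun x ⟨hxN, α, hxα, _⟩ =>
      ⟨Submodule.subset_span ⟨fst_zero_mem hxN, α, hxα⟩, trivial⟩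
  exact (hle (h (a, 0) ha)).1

lemma isGradedSubmodule_prodPairSnd {N : Submodule (R₁ × R₂) (M₁ × M₂)}
    (h : IsGradedSubmodule (fun α => (ℳ₁ α).prod (ℳ₂ α)) N) :
    IsGradedSubmodule ℳ₂ (prodPairSnd N) := by
  intro a ha
  have hle : Submodule.span (R₁ × R₂) {m | m ∈ N ∧ ∃ α, m ∈ (ℳ₁ α).prod (ℳ₂ α)} ≤
      prodPairSubmodule ⊤ (Submodule.span R₂ {m | m ∈ prodPairSnd N ∧ ∃ α, m ∈ ℳ₂ α}) :=
    Submodule.span_le.2 fun x ⟨hxN, α, _, hxα⟩ =>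
      ⟨trivial, Submodule.subset_span ⟨zero_snd_mem hxN, α, hxα⟩⟩
  exact (hle (h (0, a) ha)).2

lemma CompletelyGradedIrreducible.prodPairSubmodule_top [DecidableEq G]
    (hI₂ : DirectSum.IsInternal ℳ₂) {U : Submodule R₁ M₁}
    (hU : CompletelyGradedIrreducible ℳ₁ U) :
    CompletelyGradedIrreducible (fun α => (ℳ₁ α).prod (ℳ₂ α))
      (prodPairSubmodule U (⊤ : Submodule R₂ M₂)) := by
  obtain ⟨hgr, hne, hirr⟩ := hU
  refine ⟨hgr.prodPair (isGradedSubmodule_top hI₂), fun htop => hne ?_, fun S hSgr hS => ?_⟩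
  · simpa using congrArg prodPairFst htop
  · have hU : U = sInf (prodPairFst '' S) := by
      rw [← prodPairFst_sInf, ← hS, prodPairFst_prodPairSubmodule]
    obtain ⟨D, hD, rfl⟩ := hirr _ (by rintro _ ⟨D, hD, rfl⟩; exact isGradedSubmodule_prodPairFst (hSgr D hD)) hU
    have hDeq : prodPairSubmodule (prodPairFst D) ⊤ = D :=
      le_antisymm (hS ▸ sInf_le hD) (le_prodPairSubmodule_prodPairFst_top D)
    rw [hDeq]
    exact hD

lemma CompletelyGradedIrreducible.prodPairFst_or_eq_top [DecidableEq G]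
    (hI₁ : DirectSum.IsInternal ℳ₁) (hI₂ : DirectSum.IsInternal ℳ₂)
    {U : Submodule (R₁ × R₂) (M₁ × M₂)}
    (hU : CompletelyGradedIrreducible (fun α => (ℳ₁ α).prod (ℳ₂ α)) U) :
    CompletelyGradedIrreducible ℳ₁ (prodPairFst U) ∨ prodPairFst U = ⊤ := by
  obtain ⟨hgr, hne, hirr⟩ := hU
  have hsplit := (prodPairSubmodule_fst_top_inf_top_snd U).symm
  rw [← sInf_pair] at hsplit
  rcases hirr _ (by
      rintro D (rfl | rfl)
      · exact (isGradedSubmodule_prodPairFst hgr).prodPair (isGradedSubmodule_top hI₂)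
      · exact (isGradedSubmodule_top hI₁).prodPair (isGradedSubmodule_prodPairSnd hgr)) hsplit with hfst | hsnd
  · refine .inl ⟨isGradedSubmodule_prodPairFst hgr, fun htop => hne ?_, fun S hSgr hS => ?_⟩
    · rw [hfst, htop, prodPairSubmodule_top_top]
    · rw [hS, prodPairSubmodule_sInf_top] at hfst
      obtain ⟨A, hA, hAU⟩ := hirr _ (by
        rintro _ ⟨A, hA, rfl⟩
        exact (hSgr A hA).prodPair (isGradedSubmodule_top hI₂)) hfst
      rw [← hAU, prodPairFst_prodPairSubmodule]
      exact hA
  · exact .inr (by rw [hsnd]; simp)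

end Prod

theorem stmt17_general {G : Type*} [Group G] [DecidableEq G]
    {R₁ R₂ : Type*} [CommRing R₁] [CommRing R₂]
    {M₁ M₂ : Type*} [AddCommGroup M₁] [Module R₁ M₁] [AddCommGroup M₂] [Module R₂ M₂]
    (𝒜₁ : G → AddSubgroup R₁) (𝒜₂ : G → AddSubgroup R₂)
    (ℳ₁ : G → AddSubgroup M₁) (ℳ₂ : G → AddSubgroup M₂)
    (hℳ₁ : IsModuleGrading 𝒜₁ ℳ₁) (hℳ₂ : IsModuleGrading 𝒜₂ ℳ₂)
    (C₁ : Submodule R₁ M₁) :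
    IsGrStronglyClassical2AbsorbingSecond (fun α => (𝒜₁ α).prod (𝒜₂ α))
        (fun α => (ℳ₁ α).prod (ℳ₂ α)) (prodPairSubmodule C₁ (⊥ : Submodule R₂ M₂)) ↔
      IsGrStronglyClassical2AbsorbingSecond 𝒜₁ ℳ₁ C₁ := by
  constructor
  · rintro ⟨hne, hgr, habs⟩
    refine ⟨fun h => hne (by rw [h]; ext; simp [Prod.ext_iff]), by simpa using isGradedSubmodule_prodPairFst hgr, ?_⟩
    rintro r s t ⟨α, hr⟩ ⟨β, hs⟩ ⟨γ, ht⟩ U₁ U₂ U₃ hU₁ hU₂ hU₃ hle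
    have := habs (r, 0) (s, 0) (t, 0) ⟨α, hr, (𝒜₂ α).zero_mem⟩ ⟨β, hs, (𝒜₂ β).zero_mem⟩
      ⟨γ, ht, (𝒜₂ γ).zero_mem⟩ _ _ _ (hU₁.prodPairSubmodule_top hℳ₂.isInternal)
      (hU₂.prodPairSubmodule_top hℳ₂.isInternal) (hU₃.prodPairSubmodule_top hℳ₂.isInternal)
      (by simpa only [smul_prodPairSubmodule, Submodule.smul_bot', prodPairSubmodule_bot_le_iff,
        prodPairFst_inf, prodPairFst_prodPairSubmodule] using hle)
    simpa only [smul_prodPairSubmodule, Submodule.smul_bot', prodPairSubmodule_bot_le_iff,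
      prodPairFst_inf, prodPairFst_prodPairSubmodule] using this
  · intro hC₁
    refine ⟨fun h => hC₁.1 (by simpa using congrArg prodPairFst h),
      hC₁.2.1.prodPair isGradedSubmodule_bot, ?_⟩
    rintro r s t ⟨α, hr⟩ ⟨β, hs⟩ ⟨γ, ht⟩ U₁ U₂ U₃ hU₁ hU₂ hU₃ hle
    simp only [smul_prodPairSubmodule, Submodule.smul_bot', prodPairSubmodule_bot_le_iff,
      prodPairFst_inf] at hle ⊢
    exact hC₁.absorbing_of_irreducible_or_top ⟨α, hr.1⟩ ⟨β, hs.1⟩ ⟨γ, ht.1⟩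
      (hU₁.prodPairFst_or_eq_top hℳ₁.isInternal hℳ₂.isInternal)
      (hU₂.prodPairFst_or_eq_top hℳ₁.isInternal hℳ₂.isInternal)
      (hU₃.prodPairFst_or_eq_top hℳ₁.isInternal hℳ₂.isInternal) hle

theorem stmt17 {G : Type*} [Group G] [DecidableEq G]
    {R₁ R₂ : Type*} [CommRing R₁] [CommRing R₂]
    {M₁ M₂ : Type*} [AddCommGroup M₁] [Module R₁ M₁] [AddCommGroup M₂] [Module R₂ M₂]
    (𝒜₁ : G → AddSubgroup R₁) (𝒜₂ : G → AddSubgroup R₂)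
    (ℳ₁ : G → AddSubgroup M₁) (ℳ₂ : G → AddSubgroup M₂)
    (h𝒜₁ : IsRingGrading 𝒜₁) (h𝒜₂ : IsRingGrading 𝒜₂)
    (hℳ₁ : IsModuleGrading 𝒜₁ ℳ₁) (hℳ₂ : IsModuleGrading 𝒜₂ ℳ₂)
    (C₁ : Submodule R₁ M₁) (hC₁0 : C₁ ≠ ⊥) (hC₁gr : IsGradedSubmodule ℳ₁ C₁) :
    IsGrStronglyClassical2AbsorbingSecond (fun α => (𝒜₁ α).prod (𝒜₂ α))
        (fun α => (ℳ₁ α).prod (ℳ₂ α)) (prodPairSubmodule C₁ (⊥ : Submodule R₂ M₂)) ↔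
      IsGrStronglyClassical2AbsorbingSecond 𝒜₁ ℳ₁ C₁ :=
  stmt17_general 𝒜₁ 𝒜₂ ℳ₁ ℳ₂ hℳ₁ hℳ₂ C₁
end
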